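/- Let ρ : ℝ × ℝ² → ℝ be continuously differentiable, write ρ_t(θ) = ρ(t, θ), and let u : ℝ × ℝ² → ℝ² be continuous with each ρ_t differentiable in θ. Suppose that: (i) for every t ≥ 0 and every θ ∈ ℝ², ∂ρ/∂t(t, θ) + ⟨∇ρ_t(θ), u(t, θ)⟩ = 0; and (ii) for every t ≥ 0, every k ∈ ℤ² and every θ ∈ ℝ², ⟨∇ρ_t(θ), A_k(θ)⟩ = 0 and ⟨∇ρ_t(θ), B_k(θ)⟩ = 0. Then ρ is constant: for every t ≥ 0 and every θ ∈ ℝ², ρ(t, θ) = ρ(0, (0,0)). -/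

import Mathlib

/-- The gradient `(∂₁g θ, ∂₂g θ)` of a function `g : ℝ² → ℝ`. -/
noncomputable def grad2 (g : ℝ × ℝ → ℝ) (θ : ℝ × ℝ) : ℝ × ℝ :=
  (fderiv ℝ g θ (1, 0), fderiv ℝ g θ (0, 1))

/-- The Euclidean inner product on `ℝ²`. -/
def dot2 (a b : ℝ × ℝ) : ℝ := a.1 * b.1 + a.2 * b.2

/-- The divergence-free vector field `A_k (θ) = (k₂ cos (k⬝θ), −k₁ cos (k⬝θ))` on `ℝ²`. -/
noncomputable def fieldA (k : ℤ × ℤ) (θ : ℝ × ℝ) : ℝ × ℝ :=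
  ((k.2 : ℝ) * Real.cos (k.1 * θ.1 + k.2 * θ.2),
    -(k.1 : ℝ) * Real.cos (k.1 * θ.1 + k.2 * θ.2))

/-- The divergence-free vector field `B_k (θ) = (k₂ sin (k⬝θ), −k₁ sin (k⬝θ))` on `ℝ²`. -/
noncomputable def fieldB (k : ℤ × ℤ) (θ : ℝ × ℝ) : ℝ × ℝ :=
  ((k.2 : ℝ) * Real.sin (k.1 * θ.1 + k.2 * θ.2),
    -(k.1 : ℝ) * Real.sin (k.1 * θ.1 + k.2 * θ.2))

/-!
Testing the stationary equations against `A_k`, `B_k` for `k = (0, 1)` and `k = (1, 0)` gives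
`∂₁ρ_t · cos θ₂ = ∂₁ρ_t · sin θ₂ = 0` and `∂₂ρ_t · cos θ₁ = ∂₂ρ_t · sin θ₁ = 0`, so the spatial
gradient of `ρ_t` vanishes and `ρ_t` is constant in space. The transport equation then reduces to
`∂ρ/∂t = 0`, so `ρ` is also constant in time.
-/

open Real

theorem eq_zero_of_mul_cos_eq_zero_of_mul_sin_eq_zero {a x : ℝ}
    (hc : a * cos x = 0) (hs : a * sin x = 0) : a = 0 := by
  linear_combination cos x * hc + sin x * hs - a * cos_sq_add_sin_sq x

theorem dot2_fieldA_zero_one (v θ : ℝ × ℝ) : dot2 v (fieldA (0, 1) θ) = v.1 * cos θ.2 := by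
  simp [dot2, fieldA]

theorem dot2_fieldB_zero_one (v θ : ℝ × ℝ) : dot2 v (fieldB (0, 1) θ) = v.1 * sin θ.2 := by
  simp [dot2, fieldB]

theorem dot2_fieldA_one_zero (v θ : ℝ × ℝ) : dot2 v (fieldA (1, 0) θ) = -(v.2 * cos θ.1) := by
  simp [dot2, fieldA]

theorem dot2_fieldB_one_zero (v θ : ℝ × ℝ) : dot2 v (fieldB (1, 0) θ) = -(v.2 * sin θ.1) := by
  simp [dot2, fieldB]

theorem eq_zero_of_dot2_fieldA_of_dot2_fieldB {v θ : ℝ × ℝ}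
    (hA : ∀ k : ℤ × ℤ, dot2 v (fieldA k θ) = 0) (hB : ∀ k : ℤ × ℤ, dot2 v (fieldB k θ) = 0) :
    v = 0 := by
  have hA₁ := hA (0, 1)
  have hB₁ := hB (0, 1)
  have hA₂ := hA (1, 0)
  have hB₂ := hB (1, 0)
  rw [dot2_fieldA_zero_one] at hA₁
  rw [dot2_fieldB_zero_one] at hB₁
  rw [dot2_fieldA_one_zero, neg_eq_zero] at hA₂
  rw [dot2_fieldB_one_zero, neg_eq_zero] at hB₂
  exact Prod.ext (eq_zero_of_mul_cos_eq_zero_of_mul_sin_eq_zero hA₁ hB₁)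
    (eq_zero_of_mul_cos_eq_zero_of_mul_sin_eq_zero hA₂ hB₂)

theorem fderiv_eq_zero_of_grad2_eq_zero {g : ℝ × ℝ → ℝ} {θ : ℝ × ℝ} (h : grad2 g θ = 0) :
    fderiv ℝ g θ = 0 := by
  obtain ⟨h₁, h₂⟩ := Prod.ext_iff.mp h
  refine ContinuousLinearMap.prod_ext ?_ ?_ <;> refine ContinuousLinearMap.ext_ring ?_
  · simpa [grad2] using h₁
  · simpa [grad2] using h₂

theorem apply_eq_apply_zero_of_deriv_eq_zero_of_nonneg {E : Type*} [NormedAddCommGroup E]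
    [NormedSpace ℝ E] {f : ℝ → E} (hf : Differentiable ℝ f)
    (h : ∀ s, 0 ≤ s → deriv f s = 0) {t : ℝ} (ht : 0 ≤ t) : f t = f 0 :=
  constant_of_has_deriv_right_zero hf.continuous.continuousOn
    (fun s hs => by simpa [h s hs.1] using (hf s).hasDerivAt.hasDerivWithinAt) t ⟨ht, le_rfl⟩

theorem density_constant_on_torus_general
    (ρ : ℝ × (ℝ × ℝ) → ℝ) (u : ℝ × (ℝ × ℝ) → ℝ × ℝ)
    (hρ : ContDiff ℝ 1 ρ)
    (hi : ∀ t : ℝ, 0 ≤ t → ∀ θ : ℝ × ℝ,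
      deriv (fun s : ℝ => ρ (s, θ)) t
        + dot2 (grad2 (fun θ' : ℝ × ℝ => ρ (t, θ')) θ) (u (t, θ)) = 0)
    (hiiA : ∀ t : ℝ, 0 ≤ t → ∀ (k : ℤ × ℤ) (θ : ℝ × ℝ),
      dot2 (grad2 (fun θ' : ℝ × ℝ => ρ (t, θ')) θ) (fieldA k θ) = 0)
    (hiiB : ∀ t : ℝ, 0 ≤ t → ∀ (k : ℤ × ℤ) (θ : ℝ × ℝ),
      dot2 (grad2 (fun θ' : ℝ × ℝ => ρ (t, θ')) θ) (fieldB k θ) = 0) :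
    ∀ t : ℝ, 0 ≤ t → ∀ θ : ℝ × ℝ, ρ (t, θ) = ρ (0, (0, 0)) := by
  have hdiff := hρ.differentiable one_ne_zero
  have hgrad : ∀ t, 0 ≤ t → ∀ θ, grad2 (fun θ' => ρ (t, θ')) θ = 0 := fun t ht θ =>
    eq_zero_of_dot2_fieldA_of_dot2_fieldB (hiiA t ht · θ) (hiiB t ht · θ)
  have hspace : ∀ t, 0 ≤ t → ∀ θ, ρ (t, θ) = ρ (t, (0, 0)) := fun t ht θ =>
    is_const_of_fderiv_eq_zero (hdiff.comp ((differentiable_const t).prodMk differentiable_id))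
      (fun θ => fderiv_eq_zero_of_grad2_eq_zero (hgrad t ht θ)) θ (0, 0)
  have htime : ∀ s, 0 ≤ s → deriv (fun s => ρ (s, (0, 0))) s = 0 := fun s hs => by
    simpa [hgrad s hs, dot2] using hi s hs (0, 0)
  intro t ht θ
  rw [hspace t ht θ]
  exact apply_eq_apply_zero_of_deriv_eq_zero_of_nonneg (f := fun s => ρ (s, (0, 0)))
    (hdiff.comp (differentiable_id.prodMk (differentiable_const _))) htime ht

/-- Let `ρ : ℝ × ℝ² → ℝ` be continuously differentiable, `ρ_t (θ) = ρ (t, θ)`,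
and let `u : ℝ × ℝ² → ℝ²` be continuous, with each `ρ_t` differentiable in `θ`. Suppose
(i) for every `t ≥ 0` and `θ ∈ ℝ²`, `∂ρ/∂t (t, θ) + ⟨∇ρ_t (θ), u (t, θ)⟩ = 0`, and
(ii) for every `t ≥ 0`, `k ∈ ℤ²` and `θ ∈ ℝ²`, `⟨∇ρ_t (θ), A_k (θ)⟩ = 0` and
`⟨∇ρ_t (θ), B_k (θ)⟩ = 0`. Then `ρ` is constant: `ρ (t, θ) = ρ (0, (0, 0))` for all
`t ≥ 0`, `θ ∈ ℝ²`. -/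
theorem density_constant_on_torus
    (ρ : ℝ × (ℝ × ℝ) → ℝ) (u : ℝ × (ℝ × ℝ) → ℝ × ℝ)
    (hρ : ContDiff ℝ 1 ρ) (hu : Continuous u)
    (hρt : ∀ t : ℝ, Differentiable ℝ (fun θ : ℝ × ℝ => ρ (t, θ)))
    (hi : ∀ t : ℝ, 0 ≤ t → ∀ θ : ℝ × ℝ,
      deriv (fun s : ℝ => ρ (s, θ)) t
        + dot2 (grad2 (fun θ' : ℝ × ℝ => ρ (t, θ')) θ) (u (t, θ)) = 0)
    (hiiA : ∀ t : ℝ, 0 ≤ t → ∀ (k : ℤ × ℤ) (θ : ℝ × ℝ),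
      dot2 (grad2 (fun θ' : ℝ × ℝ => ρ (t, θ')) θ) (fieldA k θ) = 0)
    (hiiB : ∀ t : ℝ, 0 ≤ t → ∀ (k : ℤ × ℤ) (θ : ℝ × ℝ),
      dot2 (grad2 (fun θ' : ℝ × ℝ => ρ (t, θ')) θ) (fieldB k θ) = 0) :
    ∀ t : ℝ, 0 ≤ t → ∀ θ : ℝ × ℝ, ρ (t, θ) = ρ (0, (0, 0)) :=
  density_constant_on_torus_general ρ u hρ hi hiiA hiiB
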